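/- Let ψ : (0,2) → (0,∞) be a left continuous increasing function and Ω_ψ = {(t,x) ∈ (0,2) × ℝ^{n-1} : |x| < ψ(t)}. Then Ω_ψ is quasiconvex: there exists C ≥ 1 such that any two points z₁, z₂ ∈ Ω_ψ can be joined by a rectifiable curve γ in Ω_ψ with length(γ) ≤ C |z₁ − z₂|. -/

import Mathlib

/-!
Join the two points by an L-shaped path: starting from the point with the smaller first
coordinate `t`, move in the `t`-direction with `x` fixed, then move in `x` with `t` fixed.
Since `ψ` is increasing, `|x| < ψ t` persists along the first leg, and the second leg stays in
the ball of radius `ψ t`, which contains both of its endpoints. Each leg is at most as long as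
the Euclidean distance of the endpoints, so `C = 2` works.
-/

open MeasureTheory Set Metric Filter
open scoped ENNReal Topology

noncomputable section

/-- The Euclidean (ℓ²) structure on the product `ℝ × ℝ^{n-1}`. -/
def toL2 {m : ℕ} (z : ℝ × EuclideanSpace ℝ (Fin m)) :
    WithLp 2 (ℝ × EuclideanSpace ℝ (Fin m)) :=
  (WithLp.equiv 2 (ℝ × EuclideanSpace ℝ (Fin m))).symm z

open AffineMap

section BrokenLine

variable {E : Type*} [AddCommGroup E] [Module ℝ E]

def brokenLine (a b c : E) (s : ℝ) : E :=
  if s ≤ 1 / 2 then lineMap a b (2 * s) else lineMap b c (2 * s - 1)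

@[simp]
theorem brokenLine_zero (a b c : E) : brokenLine a b c 0 = a := by
  simp [brokenLine]

@[simp]
theorem brokenLine_one (a b c : E) : brokenLine a b c 1 = c := by
  norm_num [brokenLine]

theorem brokenLine_eqOn_left (a b c : E) :
    EqOn (brokenLine a b c) (lineMap a b ∘ (2 * ·)) (Icc 0 (1 / 2)) :=
  fun _ hs => if_pos hs.2

theorem brokenLine_eqOn_right (a b c : E) :
    EqOn (brokenLine a b c) (lineMap b c ∘ (2 * · - 1)) (Icc (1 / 2) 1) := by
  rintro s ⟨hs, -⟩
  rcases hs.lt_or_eq with hs | rfl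
  · exact if_neg hs.not_ge
  · norm_num [brokenLine]

theorem map_brokenLine {F : Type*} [AddCommGroup F] [Module ℝ F] (f : E →ᵃ[ℝ] F) (a b c : E) :
    f ∘ brokenLine a b c = brokenLine (f a) (f b) (f c) := by
  funext s
  simp only [Function.comp_apply, brokenLine]
  split_ifs <;> exact f.apply_lineMap _ _ _

theorem mapsTo_brokenLine {Ω : Set E} {a b c : E} (hab : segment ℝ a b ⊆ Ω)
    (hbc : segment ℝ b c ⊆ Ω) : MapsTo (brokenLine a b c) (Icc 0 1) Ω := by
  intro s ⟨hs₀, hs₁⟩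
  rcases le_total s (1 / 2) with hs | hs
  · rw [brokenLine_eqOn_left a b c ⟨hs₀, hs⟩]
    exact hab (lineMap_mem_segment ℝ a b ⟨by linarith, by linarith⟩)
  · rw [brokenLine_eqOn_right a b c ⟨hs, hs₁⟩]
    exact hbc (lineMap_mem_segment ℝ b c ⟨by linarith, by linarith⟩)

theorem continuous_brokenLine [TopologicalSpace E] [IsTopologicalAddGroup E]
    [ContinuousSMul ℝ E] (a b c : E) : Continuous (brokenLine a b c) :=
  Continuous.if_le (lineMap_continuous.comp (by fun_prop))
    (lineMap_continuous.comp (by fun_prop)) continuous_id continuous_const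
    fun s hs => by norm_num [hs]

end BrokenLine

section Variation

variable {E : Type*} [SeminormedAddCommGroup E] [NormedSpace ℝ E]

theorem eVariationOn_lineMap_le (a b : E) :
    eVariationOn (lineMap a b : ℝ → E) (Icc 0 1) ≤ edist a b :=
  calc eVariationOn (lineMap a b ∘ id : ℝ → E) (Icc 0 1)
      ≤ nndist a b * eVariationOn id (Icc (0 : ℝ) 1) :=
        (lipschitzWith_lineMap a b).lipschitzOnWith.comp_eVariationOn_le (mapsTo_univ _ _)
    _ = edist a b := by rw [eVariationOn_id_Icc]; simp

theorem eVariationOn_brokenLine_le (a b c : E) :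
    eVariationOn (brokenLine a b c) (Icc 0 1) ≤ edist a b + edist b c := by
  have hsplit := eVariationOn.Icc_add_Icc (brokenLine a b c) (s := univ)
    (by norm_num : (0 : ℝ) ≤ 1 / 2) (by norm_num : (1 / 2 : ℝ) ≤ 1) (mem_univ _)
  simp only [univ_inter] at hsplit
  have hleft : (2 * ·) '' Icc (0 : ℝ) (1 / 2) = Icc 0 1 := by
    rw [image_mul_left_Icc' two_pos]; norm_num
  have hright : (2 * · - 1) '' Icc (1 / 2 : ℝ) 1 = Icc 0 1 := by
    simp only [sub_eq_add_neg]
    rw [image_affine_Icc' two_pos]; norm_num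
  rw [← hsplit, eVariationOn.eq_of_eqOn (brokenLine_eqOn_left a b c),
    eVariationOn.eq_of_eqOn (brokenLine_eqOn_right a b c),
    eVariationOn.comp_eq_of_monotoneOn _ _ fun x _ y _ h => by linarith,
    eVariationOn.comp_eq_of_monotoneOn _ _ fun x _ y _ h => by linarith, hleft, hright]
  exact add_le_add (eVariationOn_lineMap_le a b) (eVariationOn_lineMap_le b c)

end Variation

namespace WithLp

variable {p : ℝ≥0∞} [Fact (1 ≤ p)] {α β : Type*} [SeminormedAddCommGroup α]
  [SeminormedAddCommGroup β]

theorem dist_toLp_mk_of_snd_eq (a a' : α) (x : β) :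
    dist (toLp p (a, x)) (toLp p (a', x)) = dist a a' := by
  rw [dist_eq_norm, dist_eq_norm, ← toLp_sub, Prod.mk_sub_mk, sub_self, norm_toLp_fst]

theorem dist_toLp_mk_of_fst_eq (a : α) (x x' : β) :
    dist (toLp p (a, x)) (toLp p (a, x')) = dist x x' := by
  rw [dist_eq_norm, dist_eq_norm, ← toLp_sub, Prod.mk_sub_mk, sub_self, norm_toLp_snd]

theorem dist_toLp_corner_left_le (z w : α × β) :
    dist (toLp p z) (toLp p (w.1, z.2)) ≤ dist (toLp p z) (toLp p w) :=
  (dist_toLp_mk_of_snd_eq z.1 w.1 z.2).trans_le (dist_fst_le (toLp p z) (toLp p w))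

theorem dist_toLp_corner_right_le (z w : α × β) :
    dist (toLp p (w.1, z.2)) (toLp p w) ≤ dist (toLp p z) (toLp p w) :=
  (dist_toLp_mk_of_fst_eq w.1 z.2 w.2).trans_le (dist_snd_le (toLp p z) (toLp p w))

end WithLp

section CuspDomain

variable {E : Type*} [SeminormedAddCommGroup E] [NormedSpace ℝ E]

def cuspDomain (I : Set ℝ) (ψ : ℝ → ℝ) : Set (ℝ × E) :=
  {z | z.1 ∈ I ∧ ‖z.2‖ < ψ z.1}

variable {I : Set ℝ} {ψ : ℝ → ℝ} {p q : ℝ × E}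

theorem segment_corner_left_subset_cuspDomain [I.OrdConnected] (hψ : MonotoneOn ψ I)
    (hp : p ∈ cuspDomain I ψ) (hq : q ∈ cuspDomain I ψ) (hpq : p.1 ≤ q.1) :
    segment ℝ p (q.1, p.2) ⊆ cuspDomain I ψ := by
  refine ((convex_Icc p.1 q.1).prod (convex_singleton p.2)).segment_subset (y := (q.1, p.2))
    ⟨left_mem_Icc.2 hpq, rfl⟩ ⟨right_mem_Icc.2 hpq, rfl⟩ |>.trans ?_
  rintro ⟨t, x⟩ ⟨ht, rfl : x = p.2⟩
  have htI : t ∈ I := Set.OrdConnected.out ‹_› hp.1 hq.1 ht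
  exact ⟨htI, hp.2.trans_le (hψ hp.1 htI ht.1)⟩

theorem segment_corner_right_subset_cuspDomain (hψ : MonotoneOn ψ I)
    (hp : p ∈ cuspDomain I ψ) (hq : q ∈ cuspDomain I ψ) (hpq : p.1 ≤ q.1) :
    segment ℝ (q.1, p.2) q ⊆ cuspDomain I ψ := by
  have hcorner : ‖p.2‖ < ψ q.1 := hp.2.trans_le (hψ hp.1 hq.1 hpq)
  refine ((convex_singleton q.1).prod (convex_ball (0 : E) (ψ q.1))).segment_subset
    (x := (q.1, p.2))
    ⟨rfl, mem_ball_zero_iff.2 hcorner⟩ ⟨rfl, mem_ball_zero_iff.2 hq.2⟩ |>.trans ?_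
  rintro ⟨t, x⟩ ⟨rfl : t = q.1, hx⟩
  exact ⟨hq.1, mem_ball_zero_iff.1 hx⟩

theorem exists_corner_cuspDomain [I.OrdConnected] (hψ : MonotoneOn ψ I)
    {z₁ z₂ : ℝ × E} (hz₁ : z₁ ∈ cuspDomain I ψ) (hz₂ : z₂ ∈ cuspDomain I ψ) :
    ∃ b, segment ℝ z₁ b ⊆ cuspDomain I ψ ∧ segment ℝ b z₂ ⊆ cuspDomain I ψ ∧
      dist (WithLp.toLp 2 z₁) (WithLp.toLp 2 b) ≤ dist (WithLp.toLp 2 z₁) (WithLp.toLp 2 z₂) ∧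
      dist (WithLp.toLp 2 b) (WithLp.toLp 2 z₂) ≤ dist (WithLp.toLp 2 z₁) (WithLp.toLp 2 z₂) := by
  wlog h : z₁.1 ≤ z₂.1 generalizing z₁ z₂
  · obtain ⟨b, h₁, h₂, d₁, d₂⟩ := this hz₂ hz₁ (le_of_not_ge h)
    refine ⟨b, segment_symm ℝ z₁ b ▸ h₂, segment_symm ℝ b z₂ ▸ h₁, ?_, ?_⟩
    · simpa only [dist_comm] using d₂
    · simpa only [dist_comm] using d₁
  exact ⟨(z₂.1, z₁.2), segment_corner_left_subset_cuspDomain hψ hz₁ hz₂ h,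
    segment_corner_right_subset_cuspDomain hψ hz₁ hz₂ h,
    WithLp.dist_toLp_corner_left_le z₁ z₂, WithLp.dist_toLp_corner_right_le z₁ z₂⟩

end CuspDomain

theorem cusp_quasiconvex_general {m : ℕ} (ψ : ℝ → ℝ)
    (hmono : ∀ s ∈ Ioo (0:ℝ) 2, ∀ t ∈ Ioo (0:ℝ) 2, s ≤ t → ψ s ≤ ψ t) :
    ∃ C : ℝ, 1 ≤ C ∧
      ∀ z₁ ∈ {z : ℝ × EuclideanSpace ℝ (Fin m) | z.1 ∈ Ioo (0:ℝ) 2 ∧ ‖z.2‖ < ψ z.1},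
      ∀ z₂ ∈ {z : ℝ × EuclideanSpace ℝ (Fin m) | z.1 ∈ Ioo (0:ℝ) 2 ∧ ‖z.2‖ < ψ z.1},
        ∃ γ : ℝ → ℝ × EuclideanSpace ℝ (Fin m),
          ContinuousOn γ (Icc 0 1) ∧ γ 0 = z₁ ∧ γ 1 = z₂ ∧
          MapsTo γ (Icc 0 1)
            {z : ℝ × EuclideanSpace ℝ (Fin m) | z.1 ∈ Ioo (0:ℝ) 2 ∧ ‖z.2‖ < ψ z.1} ∧
          eVariationOn (fun s => toL2 (γ s)) (Icc 0 1) ≤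
            ENNReal.ofReal (C * dist (toL2 z₁) (toL2 z₂)) := by
  refine ⟨2, one_le_two, fun z₁ hz₁ z₂ hz₂ => ?_⟩
  obtain ⟨b, h₁, h₂, d₁, d₂⟩ := exists_corner_cuspDomain (I := Ioo 0 2) hmono hz₁ hz₂
  refine ⟨brokenLine z₁ b z₂, (continuous_brokenLine z₁ b z₂).continuousOn,
    brokenLine_zero z₁ b z₂, brokenLine_one z₁ b z₂, mapsTo_brokenLine h₁ h₂, ?_⟩
  have hL2 : (fun s => toL2 (brokenLine z₁ b z₂ s)) =
      brokenLine (toL2 z₁) (toL2 b) (toL2 z₂) :=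
    map_brokenLine (WithLp.linearEquiv 2 ℝ _).symm.toLinearMap.toAffineMap z₁ b z₂
  calc eVariationOn (fun s => toL2 (brokenLine z₁ b z₂ s)) (Icc 0 1)
      ≤ edist (toL2 z₁) (toL2 b) + edist (toL2 b) (toL2 z₂) :=
        hL2 ▸ eVariationOn_brokenLine_le _ _ _
    _ ≤ ENNReal.ofReal (2 * dist (toL2 z₁) (toL2 z₂)) := by
      rw [edist_dist, edist_dist, ← ENNReal.ofReal_add dist_nonneg dist_nonneg]
      exact ENNReal.ofReal_le_ofReal ((add_le_add d₁ d₂).trans_eq (two_mul _).symm)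

/-- The cuspidal domain `Ω_ψ` is quasiconvex: there is `C ≥ 1` such that any
two of its points can be joined by a rectifiable curve in `Ω_ψ` whose (Euclidean) length is
at most `C` times the (Euclidean) distance of the endpoints. -/
theorem cusp_quasiconvex {m : ℕ} (ψ : ℝ → ℝ)
    (hpos : ∀ t ∈ Ioo (0:ℝ) 2, 0 < ψ t)
    (hmono : ∀ s ∈ Ioo (0:ℝ) 2, ∀ t ∈ Ioo (0:ℝ) 2, s ≤ t → ψ s ≤ ψ t)
    (hlc : ∀ t ∈ Ioo (0:ℝ) 2, Tendsto ψ (nhdsWithin t (Ioo 0 t)) (nhds (ψ t)))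
    (hext : ∀ t ∈ Ioo (1:ℝ) 2, ψ t = ψ 1) :
    ∃ C : ℝ, 1 ≤ C ∧
      ∀ z₁ ∈ {z : ℝ × EuclideanSpace ℝ (Fin m) | z.1 ∈ Ioo (0:ℝ) 2 ∧ ‖z.2‖ < ψ z.1},
      ∀ z₂ ∈ {z : ℝ × EuclideanSpace ℝ (Fin m) | z.1 ∈ Ioo (0:ℝ) 2 ∧ ‖z.2‖ < ψ z.1},
        ∃ γ : ℝ → ℝ × EuclideanSpace ℝ (Fin m),
          ContinuousOn γ (Icc 0 1) ∧ γ 0 = z₁ ∧ γ 1 = z₂ ∧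
          MapsTo γ (Icc 0 1)
            {z : ℝ × EuclideanSpace ℝ (Fin m) | z.1 ∈ Ioo (0:ℝ) 2 ∧ ‖z.2‖ < ψ z.1} ∧
          eVariationOn (fun s => toL2 (γ s)) (Icc 0 1) ≤
            ENNReal.ofReal (C * dist (toL2 z₁) (toL2 z₂)) :=
  cusp_quasiconvex_general ψ hmono
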